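/- arXiv:1510.05098 — 6 statements merged into one kernel-verified Lean document; each statement's English description precedes it below -/
import Mathlib

section
/- Let R be a ring and let ζ : Q₀ → Q₁ be a homomorphism of right R-modules with Q₁ injective. Then the class 𝓑_ζ is closed under submodules: if Y ∈ 𝓑_ζ and X → Y is an injective R-module homomorphism, then X ∈ 𝓑_ζ. -/
universe u v

open Function

variable (R : Type u) [Ring R]

/-- `X ∈ 𝓑_ζ`: every map `X → Q₁` factors through `ζ`. -/
def MemB {Q₀ Q₁ : Type v} [AddCommGroup Q₀] [Module R Q₀] [AddCommGroup Q₁] [Module R Q₁]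
    (ζ : Q₀ →ₗ[R] Q₁) (X : Type v) [AddCommGroup X] [Module R X] : Prop :=
  Surjective fun g : X →ₗ[R] Q₀ => ζ ∘ₗ g

/-- If `Q₁` is injective then `𝓑_ζ` is closed under submodules. -/
theorem stmt_0 {Q₀ Q₁ : Type v} [AddCommGroup Q₀] [Module R Q₀] [AddCommGroup Q₁] [Module R Q₁]
    (ζ : Q₀ →ₗ[R] Q₁) [Module.Injective R Q₁]
    (X Y : Type v) [AddCommGroup X] [Module R X] [AddCommGroup Y] [Module R Y]
    (hY : MemB R ζ Y) (f : X →ₗ[R] Y) (hf : Injective f) : MemB R ζ X := by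
  intro h
  obtain ⟨h', hh'⟩ := Module.Injective.out f hf h
  obtain ⟨g, hg⟩ := hY h'
  refine ⟨g ∘ₗ f, ?_⟩
  ext x
  simp only [LinearMap.comp_apply]
  rw [show ζ (g (f x)) = (ζ ∘ₗ g) (f x) from rfl, show ζ ∘ₗ g = h' from hg, hh']
end

section
/- Let R be a ring and let ζ : Q₀ → Q₁ be a homomorphism of right R-modules with Q₀ injective. Then the class 𝓑_ζ is closed under extensions: if 0 → X → Y → Z → 0 is a short exact sequence of right R-modules with X ∈ 𝓑_ζ and Z ∈ 𝓑_ζ, then Y ∈ 𝓑_ζ. -/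
universe u v

open Function

variable (R : Type u) [Ring R]

/-- If `Q₀` is injective then `𝓑_ζ` is closed under extensions. -/
theorem stmt_1 {Q₀ Q₁ : Type v} [AddCommGroup Q₀] [Module R Q₀] [AddCommGroup Q₁] [Module R Q₁]
    (ζ : Q₀ →ₗ[R] Q₁) [Module.Injective R Q₀]
    (X Y Z : Type v) [AddCommGroup X] [Module R X] [AddCommGroup Y] [Module R Y]
    [AddCommGroup Z] [Module R Z]
    (i : X →ₗ[R] Y) (p : Y →ₗ[R] Z) (hi : Injective i) (hp : Surjective p)
    (hex : LinearMap.range i = LinearMap.ker p)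
    (hX : MemB R ζ X) (hZ : MemB R ζ Z) : MemB R ζ Y := by
  intro f
  -- lift f ∘ i through ζ
  obtain ⟨g₀, hg₀⟩ := hX (f ∘ₗ i)
  -- extend g₀ along i
  obtain ⟨h, hh⟩ := Module.Injective.out i hi g₀
  -- φ := f - ζ ∘ h vanishes on ker p
  set φ : Y →ₗ[R] Q₁ := f - ζ ∘ₗ h with hφ
  have hker : LinearMap.ker p ≤ LinearMap.ker φ := by
    rw [← hex]
    rintro y ⟨x, rfl⟩
    have : ζ (g₀ x) = f (i x) := congrFun (congrArg DFunLike.coe hg₀) x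
    simp [hφ, hh x, this]
  -- factor φ through p
  let e := p.quotKerEquivOfSurjective hp
  let k : Z →ₗ[R] Q₁ := ((LinearMap.ker p).liftQ φ hker) ∘ₗ e.symm.toLinearMap
  have hk : ∀ y, k (p y) = φ y := by
    intro y
    have he : e ((LinearMap.ker p).mkQ y) = p y := rfl
    have : e.symm (p y) = (LinearMap.ker p).mkQ y := by
      rw [← he, e.symm_apply_apply]
    simp only [k, LinearMap.comp_apply, LinearEquiv.coe_coe, this]
    exact Submodule.liftQ_apply _ _ _
  obtain ⟨k₀, hk₀⟩ := hZ k
  refine ⟨h + k₀ ∘ₗ p, ?_⟩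
  ext y
  have h1 : ζ (k₀ (p y)) = k (p y) := congrFun (congrArg DFunLike.coe hk₀) (p y)
  simp only [LinearMap.comp_apply, LinearMap.add_apply, map_add, h1, hk y, hφ,
    LinearMap.sub_apply, LinearMap.comp_apply]
  abel
end

section
/- Let R be a ring and let ζ : Q₀ → Q₁ be a homomorphism of right R-modules with Q₁ injective, and let T = Ker(ζ). If 0 → A → B → X → 0 is a short exact sequence of right R-modules such that A ∈ 𝓑_ζ, B ∈ 𝓑_ζ and Ext¹_R(X,T) = 0, then X ∈ 𝓑_ζ. -/
universe u v

open Function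

variable (R : Type u) [Ring R]

/-- `Ext¹_R(X,T) = 0`, expressed as: every short exact sequence `0 → T → Y → X → 0` splits. -/
def Ext1Vanishes (X T : Type v) [AddCommGroup X] [Module R X] [AddCommGroup T] [Module R T] :
    Prop :=
  ∀ (Y : Type v) [AddCommGroup Y] [Module R Y] (i : T →ₗ[R] Y) (p : Y →ₗ[R] X),
    Injective i → Surjective p → LinearMap.range i = LinearMap.ker p →
    ∃ s : X →ₗ[R] Y, p ∘ₗ s = LinearMap.id

/-!
Given `φ : X → Q₁`, lift `φ ∘ g` through `ζ` to `β : B → Q₀`. On `ker g` the map `β` takes values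
in `T = ker ζ`. Pushing `0 → ker g → B → X → 0` out along `β|ker g` gives an extension of `X` by
`T`, which splits because `Ext¹(X, T) = 0`; hence `β|ker g` extends to some `k : B → T`. Then
`β - k` vanishes on `ker g`, so it descends to a map `X → Q₀`, which lifts `φ` because
`ζ ∘ k = 0`.
-/

open LinearMap

section

variable {R} {B X T : Type v} [AddCommGroup B] [Module R B] [AddCommGroup X] [Module R X]
  [AddCommGroup T] [Module R T]

theorem Ext1Vanishes.exists_retraction (hX : Ext1Vanishes R X T) {Y : Type v} [AddCommGroup Y]
    [Module R Y] {i : T →ₗ[R] Y} {p : Y →ₗ[R] X} (hi : Injective i) (hp : Surjective p)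
    (hip : Exact i p) : ∃ r : Y →ₗ[R] T, r ∘ₗ i = LinearMap.id :=
  ((hip.split_tfae hi hp).out 0 1).mp (hX Y i p hi hp (exact_iff.mp hip).symm)

abbrev Pushout (N : Submodule R B) (h : N →ₗ[R] T) : Type v :=
  (T × B) ⧸ range ((-h).prod N.subtype)

namespace Pushout

section

variable (N : Submodule R B) (h : N →ₗ[R] T)

def inl : T →ₗ[R] Pushout N h :=
  (range ((-h).prod N.subtype)).mkQ ∘ₗ LinearMap.inl R T B

def inr : B →ₗ[R] Pushout N h :=
  (range ((-h).prod N.subtype)).mkQ ∘ₗ LinearMap.inr R T B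

variable {N h}

theorem inl_injective : Injective (inl N h) := by
  rw [injective_iff_map_eq_zero]
  intro t ht
  obtain ⟨n, hn⟩ := (Submodule.Quotient.mk_eq_zero _).mp ht
  obtain rfl : n = 0 := Subtype.ext (congrArg Prod.snd hn)
  simpa using (congrArg Prod.fst hn).symm

theorem inr_eq_inl (n : N) : inr N h n = inl N h (h n) :=
  (Submodule.Quotient.eq _).mpr ⟨n, by simp⟩

theorem inl_add_inr (t : T) (b : B) :
    inl N h t + inr N h b = Submodule.Quotient.mk (t, b) := by
  simp [inl, inr, ← Submodule.Quotient.mk_add]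

end

section

variable (g : B →ₗ[R] X) (h : ker g →ₗ[R] T)

def proj : Pushout (ker g) h →ₗ[R] X :=
  (range ((-h).prod (ker g).subtype)).liftQ (g ∘ₗ LinearMap.snd R T B) (by
    rintro _ ⟨n, rfl⟩
    simp)

variable {g h}

theorem proj_surjective (hg : Surjective g) : Surjective (proj g h) := fun x =>
  let ⟨b, hb⟩ := hg x
  ⟨inr _ h b, hb⟩

theorem exact_inl_proj : Exact (inl (ker g) h) (proj g h) := by
  refine exact_of_comp_eq_zero_of_ker_le_range (by ext; simp [proj, inl]) fun y hy => ?_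
  induction y using Submodule.Quotient.induction_on with | H y => ?_
  obtain ⟨t, b⟩ := y
  refine ⟨t + h ⟨b, hy⟩, ?_⟩
  rw [map_add, ← inr_eq_inl, inl_add_inr]

end

end Pushout

theorem Ext1Vanishes.exists_extension (hX : Ext1Vanishes R X T) {g : B →ₗ[R] X}
    (hg : Surjective g) (h : ker g →ₗ[R] T) : ∃ k : B →ₗ[R] T, k ∘ₗ (ker g).subtype = h := by
  obtain ⟨r, hr⟩ := hX.exists_retraction Pushout.inl_injective (Pushout.proj_surjective hg)
    Pushout.exact_inl_proj
  refine ⟨r ∘ₗ Pushout.inr _ h, LinearMap.ext fun n => ?_⟩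
  simpa [Pushout.inr_eq_inl] using congr($hr (h n))

theorem MemB.of_surjective {Q₀ Q₁ : Type v} [AddCommGroup Q₀] [Module R Q₀] [AddCommGroup Q₁]
    [Module R Q₁] {ζ : Q₀ →ₗ[R] Q₁} (hB : MemB R ζ B) (hX : Ext1Vanishes R X (ker ζ))
    {g : B →ₗ[R] X} (hg : Surjective g) : MemB R ζ X := by
  intro φ
  obtain ⟨β, hβ⟩ := hB (φ ∘ₗ g)
  have hβ_ker (n : ker g) : β n ∈ ker ζ := by
    simpa [n.2] using congr($hβ n)
  obtain ⟨k, hk⟩ := hX.exists_extension hg ((β ∘ₗ (ker g).subtype).codRestrict _ hβ_ker)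
  set β' := β - (ker ζ).subtype ∘ₗ k
  have hβ' : ker g ≤ ker β' := fun b hb => by
    have hkb : k b = β b := congr(($hk ⟨b, hb⟩ : Q₀))
    simp [β', hkb]
  refine ⟨(ker g).liftQ β' hβ' ∘ₗ (g.quotKerEquivOfSurjective hg).symm, ?_⟩
  refine (LinearMap.cancel_right hg).mp (LinearMap.ext fun b => ?_)
  simpa [β'] using congr($hβ b)

end

theorem stmt_3 {Q₀ Q₁ : Type v} [AddCommGroup Q₀] [Module R Q₀] [AddCommGroup Q₁] [Module R Q₁]
    (ζ : Q₀ →ₗ[R] Q₁)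
    (B X : Type v) [AddCommGroup B] [Module R B]
    [AddCommGroup X] [Module R X]
    (g : B →ₗ[R] X) (hg : Surjective g)
    (hB : MemB R ζ B)
    (hX : Ext1Vanishes R X ↥(LinearMap.ker ζ)) : MemB R ζ X :=
  hB.of_surjective hX hg
end

section
/- Let R be a ring and let T be a right R-module that is partial cosilting with respect to an injective copresentation ζ : Q₀ → Q₁. Then Cogen(T) ⊆ 𝓑_ζ ⊆ ⊥T. -/
universe u v

open Function

variable (R : Type u) [Ring R]

/-- `X ∈ Cogen T`: `X` embeds into a direct product of copies of `T`. -/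
def MemCogen (T : Type v) [AddCommGroup T] [Module R T]
    (X : Type v) [AddCommGroup X] [Module R X] : Prop :=
  ∃ (ι : Type v) (f : X →ₗ[R] (ι → T)), Injective f

/-!
Since `Q₁` is injective, `𝓑_ζ` is closed under submodules, so closure under products and
`T ∈ 𝓑_ζ` give `Cogen T ⊆ 𝓑_ζ`. For `X ∈ 𝓑_ζ` and `0 → T → Y → X → 0`, extend `T → Q₀` to
`φ : Y → Q₀` by injectivity of `Q₀`; then `ζ ∘ φ` descends to `X`, lifts there through `ζ` to some
`h`, and `φ - h ∘ p` lands in `ker ζ = T`, giving a retraction of `T → Y`.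
-/

namespace Function.Exact

variable {R} {M N P Q : Type*} [AddCommGroup M] [AddCommGroup N] [AddCommGroup P]
  [AddCommGroup Q] [Module R M] [Module R N] [Module R P] [Module R Q]
  {f : M →ₗ[R] N} {g : N →ₗ[R] P}

theorem exists_lift_of_comp_eq_zero (hfg : Exact f g) (hf : Injective f) {k : Q →ₗ[R] N}
    (hk : g ∘ₗ k = 0) : ∃ l : Q →ₗ[R] M, f ∘ₗ l = k := by
  have hmem (q : Q) : k q ∈ LinearMap.range f := by
    rw [← hfg.linearMap_ker_eq]
    exact LinearMap.congr_fun hk q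
  refine ⟨(LinearEquiv.ofInjective f hf).symm.toLinearMap ∘ₗ k.codRestrict _ hmem, ?_⟩
  ext q
  simp

theorem exists_desc_of_comp_eq_zero (hfg : Exact f g) (hg : Surjective g) {k : N →ₗ[R] Q}
    (hk : k ∘ₗ f = 0) : ∃ l : P →ₗ[R] Q, l ∘ₗ g = k := by
  have hle : LinearMap.range f ≤ LinearMap.ker k := by
    rintro _ ⟨m, rfl⟩
    exact LinearMap.congr_fun hk m
  refine ⟨(LinearMap.range f).liftQ k hle ∘ₗ (hfg.linearEquivOfSurjective hg).symm.toLinearMap, ?_⟩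
  ext n
  simp

end Function.Exact

namespace MemB

variable {R} {Q₀ Q₁ : Type v} [AddCommGroup Q₀] [Module R Q₀] [AddCommGroup Q₁] [Module R Q₁]
  (ζ : Q₀ →ₗ[R] Q₁) {T X Y : Type v} [AddCommGroup T] [Module R T] [AddCommGroup X] [Module R X]
  [AddCommGroup Y] [Module R Y]

theorem of_injective [Module.Injective R Q₁] {e : X →ₗ[R] Y} (he : Injective e)
    (hY : MemB R ζ Y) : MemB R ζ X := by
  intro g
  obtain ⟨g', hg'⟩ := Module.Injective.out e he g
  obtain ⟨h, hh : ζ ∘ₗ h = g'⟩ := hY g'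
  exact ⟨h ∘ₗ e, LinearMap.ext fun x => by simp [← hg' x, ← hh]⟩

theorem exists_retraction [Module.Injective R Q₀] {f : T →ₗ[R] Q₀} (hf : Injective f)
    (hfζ : Exact f ζ) (hX : MemB R ζ X) {i : T →ₗ[R] Y} {p : Y →ₗ[R] X} (hi : Injective i)
    (hip : Exact i p) (hp : Surjective p) : ∃ θ : Y →ₗ[R] T, θ ∘ₗ i = LinearMap.id := by
  obtain ⟨φ, hφ⟩ := Module.Injective.out i hi f
  have hφi : φ ∘ₗ i = f := LinearMap.ext hφ
  obtain ⟨ψ, hψ⟩ := hip.exists_desc_of_comp_eq_zero hp (k := ζ ∘ₗ φ) <| by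
    rw [LinearMap.comp_assoc, hφi, hfζ.linearMap_comp_eq_zero]
  obtain ⟨h, hh : ζ ∘ₗ h = ψ⟩ := hX ψ
  obtain ⟨θ, hθ⟩ := hfζ.exists_lift_of_comp_eq_zero hf (k := φ - h ∘ₗ p) <| by
    rw [LinearMap.comp_sub, ← LinearMap.comp_assoc, hh, hψ, sub_self]
  refine ⟨θ, (LinearMap.cancel_left hf).mp ?_⟩
  calc f ∘ₗ θ ∘ₗ i = (φ - h ∘ₗ p) ∘ₗ i := by rw [← LinearMap.comp_assoc, hθ]
    _ = f ∘ₗ LinearMap.id := by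
      rw [LinearMap.sub_comp, hφi, LinearMap.comp_assoc, hip.linearMap_comp_eq_zero,
        LinearMap.comp_zero, sub_zero, LinearMap.comp_id]

theorem ext1Vanishes [Module.Injective R Q₀] {f : T →ₗ[R] Q₀} (hf : Injective f)
    (hfζ : Exact f ζ) (hX : MemB R ζ X) : Ext1Vanishes R X T := by
  intro Y _ _ i p hi hp hip
  have hip : Exact i p := LinearMap.exact_iff.mpr hip.symm
  exact ((hip.split_tfae hi hp).out 0 1).mpr (hX.exists_retraction ζ hf hfζ hi hip hp)

end MemB

/-- If `T` is partial cosilting with respect to the injective copresentation `ζ`,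
then `Cogen T ⊆ 𝓑_ζ ⊆ ⊥T`. -/
theorem stmt_4 {Q₀ Q₁ : Type v} [AddCommGroup Q₀] [Module R Q₀] [AddCommGroup Q₁] [Module R Q₁]
    (ζ : Q₀ →ₗ[R] Q₁) [Module.Injective R Q₀] [Module.Injective R Q₁]
    (T : Type v) [AddCommGroup T] [Module R T]
    (f : T →ₗ[R] Q₀) (hf : Injective f) (hex : LinearMap.range f = LinearMap.ker ζ)
    (hT : MemB R ζ T)
    (hprod : ∀ (ι : Type v) (M : ι → Type v) [∀ i, AddCommGroup (M i)] [∀ i, Module R (M i)],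
      (∀ i, MemB R ζ (M i)) → MemB R ζ (∀ i, M i)) :
    (∀ (X : Type v) [AddCommGroup X] [Module R X], MemCogen R T X → MemB R ζ X) ∧
    (∀ (X : Type v) [AddCommGroup X] [Module R X], MemB R ζ X → Ext1Vanishes R X T) := by
  have hfζ : Exact f ζ := LinearMap.exact_iff.mpr hex.symm
  refine ⟨?_, fun X _ _ hX => hX.ext1Vanishes ζ hf hfζ⟩
  rintro X _ _ ⟨ι, e, he⟩
  exact (hprod ι (fun _ => T) fun _ => hT).of_injective ζ he
end

section
/- Let R be a ring and let T be a right R-module that is cosilting with respect to some injective copresentation ζ : Q₀ → Q₁. Then Cogen(T) = Copres(T): a right R-module embeds into a direct product of copies of T if and only if it is the kernel of a homomorphism between direct products of copies of T. -/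
universe u v

open Function

variable (R : Type u) [Ring R]

/-!
Let `X ∈ Cogen T` and let `e : X → T^I`, `I = Hom(X, T)`, be its evaluation embedding, along which
every map `X → T` extends. The cokernel `N` of `e` lies in `𝓑_ζ`: a map `φ : N → Q₁` composed with
`T^I → N` factors as `ζ ∘ ψ` because `T^I ∈ Cogen T = 𝓑_ζ`; then `ψ ∘ e` lands in `ker ζ = T`,
extends to `T^I`, and subtracting that extension makes `ψ` vanish on `X`, so it descends to `N`.
Thus `N` is cogenerated by `T`, and `X` is the kernel of the composite `T^I → N → T^κ`.
-/

section

variable {R}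

theorem LinearMap.exists_comp_eq_of_range_le {M N P : Type*} [AddCommGroup M] [Module R M]
    [AddCommGroup N] [Module R N] [AddCommGroup P] [Module R P] {f : M →ₗ[R] N}
    (hf : Injective f) {g : P →ₗ[R] N} (hg : LinearMap.range g ≤ LinearMap.range f) :
    ∃ δ : P →ₗ[R] M, f ∘ₗ δ = g := by
  refine ⟨(LinearEquiv.ofInjective f hf).symm.toLinearMap ∘ₗ
    LinearMap.codRestrict _ g fun p => hg ⟨p, rfl⟩, ?_⟩
  ext p
  simp

theorem memB_quotient_range {Q₀ Q₁ T X Y : Type v} [AddCommGroup Q₀] [Module R Q₀]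
    [AddCommGroup Q₁] [Module R Q₁] [AddCommGroup T] [Module R T] [AddCommGroup X] [Module R X]
    [AddCommGroup Y] [Module R Y] {ζ : Q₀ →ₗ[R] Q₁} {f : T →ₗ[R] Q₀} (hf : Injective f)
    (hex : LinearMap.range f = LinearMap.ker ζ) {e : X →ₗ[R] Y}
    (hext : ∀ h : X →ₗ[R] T, ∃ h' : Y →ₗ[R] T, h' ∘ₗ e = h) (hY : MemB R ζ Y) :
    MemB R ζ (Y ⧸ LinearMap.range e) := by
  intro φ
  have hζf (t : T) : ζ (f t) = 0 := by
    rw [← LinearMap.mem_ker, ← hex]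
    exact ⟨t, rfl⟩
  obtain ⟨ψ, hψ⟩ := hY (φ ∘ₗ (LinearMap.range e).mkQ)
  have hζψ (y : Y) : ζ (ψ y) = φ (Submodule.Quotient.mk y) := LinearMap.congr_fun hψ y
  have hψe : LinearMap.range (ψ ∘ₗ e) ≤ LinearMap.range f := by
    rintro _ ⟨x, rfl⟩
    rw [hex, LinearMap.mem_ker, LinearMap.comp_apply, hζψ,
      (Submodule.Quotient.mk_eq_zero _).mpr (LinearMap.mem_range_self e x), map_zero]
  obtain ⟨δ, hδ⟩ := LinearMap.exists_comp_eq_of_range_le hf hψe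
  obtain ⟨δ', hδ'⟩ := hext δ
  have hvanish : LinearMap.range e ≤ LinearMap.ker (ψ - f ∘ₗ δ') := by
    rintro _ ⟨x, rfl⟩
    rw [LinearMap.mem_ker, LinearMap.sub_apply, LinearMap.comp_apply, ← LinearMap.comp_apply δ' e,
      hδ', sub_eq_zero]
    exact (LinearMap.congr_fun hδ x).symm
  refine ⟨(LinearMap.range e).liftQ _ hvanish, ?_⟩
  ext y
  simp [hζψ, hζf]

end

def evalEmbedding (T X : Type v) [AddCommGroup T] [Module R T] [AddCommGroup X] [Module R X] :
    X →ₗ[R] ((X →ₗ[R] T) → T) :=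
  LinearMap.pi fun h => h

section

variable {R} {T X : Type v} [AddCommGroup T] [Module R T] [AddCommGroup X] [Module R X]

theorem proj_comp_evalEmbedding (h : X →ₗ[R] T) :
    LinearMap.proj h ∘ₗ evalEmbedding R T X = h :=
  rfl

theorem injective_evalEmbedding (hX : MemCogen R T X) : Injective (evalEmbedding R T X) := by
  obtain ⟨ι, f₀, hf₀⟩ := hX
  intro x y hxy
  exact hf₀ (funext fun i => (congrFun hxy (LinearMap.proj (R := R) i ∘ₗ f₀) :))

end

theorem stmt_7 {Q₀ Q₁ : Type v} [AddCommGroup Q₀] [Module R Q₀] [AddCommGroup Q₁] [Module R Q₁]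
    (ζ : Q₀ →ₗ[R] Q₁)
    (T : Type v) [AddCommGroup T] [Module R T]
    (f : T →ₗ[R] Q₀) (hf : Injective f) (hex : LinearMap.range f = LinearMap.ker ζ)
    (hcosilt : ∀ (X : Type v) [AddCommGroup X] [Module R X], MemCogen R T X ↔ MemB R ζ X) :
    ∀ (X : Type v) [AddCommGroup X] [Module R X],
      MemCogen R T X ↔
        ∃ (ι κ : Type v) (g : (ι → T) →ₗ[R] (κ → T)) (e : X →ₗ[R] (ι → T)),
          Injective e ∧ LinearMap.range e = LinearMap.ker g := by
  intro X _ _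
  refine ⟨fun hX => ?_, fun ⟨ι, _, _, e, he, _⟩ => ⟨ι, e, he⟩⟩
  let e := evalEmbedding R T X
  have hpow : MemB R ζ ((X →ₗ[R] T) → T) := (hcosilt _).mp ⟨_, LinearMap.id, injective_id⟩
  have hcoker : MemB R ζ (((X →ₗ[R] T) → T) ⧸ LinearMap.range e) :=
    memB_quotient_range hf hex (fun h => ⟨LinearMap.proj h, proj_comp_evalEmbedding h⟩) hpow
  obtain ⟨κ, v, hv⟩ := (hcosilt _).mpr hcoker
  refine ⟨_, κ, v ∘ₗ (LinearMap.range e).mkQ, e, injective_evalEmbedding hX, ?_⟩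
  rw [LinearMap.ker_comp, LinearMap.ker_eq_bot.mpr hv, Submodule.comap_bot, Submodule.ker_mkQ]
end

section
/- Let R be a ring, T a right R-module, and let 0 → T → Q₀ →ζ→ Q₁ → 0 be a short exact sequence of right R-modules with Q₀ and Q₁ injective (so that T has injective dimension at most 1). Then 𝓑_ζ = ⊥T; consequently, T is cosilting with respect to ζ (i.e. Cogen(T) = 𝓑_ζ) if and only if T is cotilting (i.e. Cogen(T) = ⊥T). -/
universe u v

open Function

variable (R : Type u) [Ring R]

/-! Given `X ∈ 𝓑_ζ` and an extension `0 → T → Y → X → 0`, extend `f` to `e : Y → Q₀` by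
injectivity of `Q₀`. Then `ζ ∘ e` vanishes on `T`, so it factors through `X`; lifting that map
`X → Q₁` along `ζ` to `k : X → Q₀`, the difference `e - k ∘ p` lands in `ker ζ = T` and is a
retraction of `T → Y`. Conversely, pulling `ζ` back along `g : X → Q₁` gives an extension of `X`
by `T`, and a splitting of it is a lift of `g` along `ζ`. -/

open LinearMap

section Exact

variable {R} {M N P Y : Type*} [AddCommGroup M] [Module R M]
  [AddCommGroup N] [Module R N] [AddCommGroup P] [Module R P] [AddCommGroup Y] [Module R Y]
  {f : M →ₗ[R] N} {g : N →ₗ[R] P}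

theorem Function.Exact.exists_lift_of_injective (h : Exact f g) (hf : Injective f)
    (φ : Y →ₗ[R] N) (hφ : g ∘ₗ φ = 0) : ∃ ψ : Y →ₗ[R] M, f ∘ₗ ψ = φ := by
  have hrange : ∀ y, φ y ∈ range f := fun y => (h (φ y)).mp (LinearMap.congr_fun hφ y)
  refine ⟨(LinearEquiv.ofInjective f hf).symm.toLinearMap ∘ₗ φ.codRestrict _ hrange, ?_⟩
  ext y
  exact congrArg Subtype.val ((LinearEquiv.ofInjective f hf).apply_symm_apply ⟨φ y, hrange y⟩)

theorem Function.Exact.exists_desc_of_surjective (h : Exact f g) (hg : Surjective g)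
    (φ : N →ₗ[R] Y) (hφ : φ ∘ₗ f = 0) : ∃ ψ : P →ₗ[R] Y, ψ ∘ₗ g = φ := by
  have hle : range f ≤ ker φ := range_le_ker_iff.mpr hφ
  refine ⟨(range f).liftQ φ hle ∘ₗ (h.linearEquivOfSurjective hg).symm.toLinearMap, ?_⟩
  ext x
  simp

end Exact

section CosiltingCotilting

variable {Q₀ Q₁ T : Type v} [AddCommGroup Q₀] [Module R Q₀] [AddCommGroup Q₁] [Module R Q₁]
  [AddCommGroup T] [Module R T] {ζ : Q₀ →ₗ[R] Q₁} {f : T →ₗ[R] Q₀}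
  {X : Type v} [AddCommGroup X] [Module R X]

theorem ext1Vanishes_of_memB [Module.Injective R Q₀] (hf : Injective f) (hfζ : Exact f ζ)
    (hX : MemB R ζ X) : Ext1Vanishes R X T := by
  intro Y _ _ i p hi hp hip
  have hexact : Exact i p := exact_iff.mpr hip.symm
  obtain ⟨e, he⟩ := Module.Injective.out i hi f
  obtain ⟨g, hg⟩ := hexact.exists_desc_of_surjective hp (ζ ∘ₗ e) <| by
    ext t
    simp [he, hfζ.apply_apply_eq_zero]
  obtain ⟨k, hk : ζ ∘ₗ k = g⟩ := hX g
  obtain ⟨r, hr⟩ := hfζ.exists_lift_of_injective hf (e - k ∘ₗ p) <| by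
    rw [comp_sub, ← LinearMap.comp_assoc, hk, hg, sub_self]
  have hri : r ∘ₗ i = LinearMap.id := by
    ext t
    apply hf
    simpa [hexact.apply_apply_eq_zero, he] using LinearMap.congr_fun hr (i t)
  exact ((hexact.split_tfae hi hp).out 0 1).mpr (show ∃ l, l ∘ₗ i = LinearMap.id from ⟨r, hri⟩)

theorem memB_of_ext1Vanishes (hζ : Surjective ζ) (hf : Injective f) (hfζ : Exact f ζ)
    (hX : Ext1Vanishes R X T) : MemB R ζ X := by
  intro g
  let Y := eqLocus (g ∘ₗ fst R X Q₀) (ζ ∘ₗ snd R X Q₀)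
  let p : Y →ₗ[R] X := fst R X Q₀ ∘ₗ Y.subtype
  let i : T →ₗ[R] Y := (inr R X Q₀ ∘ₗ f).codRestrict Y fun t =>
    mem_eqLocus.mpr (by simp [hfζ.apply_apply_eq_zero])
  have hi : Injective i := fun t t' htt' => hf (congrArg (fun y : Y => (y : X × Q₀).2) htt')
  have hp : Surjective p := fun x => by
    obtain ⟨q, hq⟩ := hζ (g x)
    exact ⟨⟨(x, q), mem_eqLocus.mpr hq.symm⟩, rfl⟩
  have hip : range i = ker p := by
    refine le_antisymm (range_le_ker_iff.mpr (by ext; simp [p, i])) ?_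
    rintro ⟨⟨x, q⟩, hxq⟩ (rfl : x = 0)
    obtain ⟨t, rfl⟩ := (hfζ q).mp (by simpa using (mem_eqLocus.mp hxq).symm)
    exact ⟨t, rfl⟩
  obtain ⟨s, hs⟩ := hX Y i p hi hp hip
  refine ⟨snd R X Q₀ ∘ₗ Y.subtype ∘ₗ s, ?_⟩
  ext x
  have hsx : g (s x : X × Q₀).1 = ζ (s x : X × Q₀).2 := mem_eqLocus.mp (s x).2
  rw [show (s x : X × Q₀).1 = x from LinearMap.congr_fun hs x] at hsx
  exact hsx.symm

theorem memB_iff_ext1Vanishes [Module.Injective R Q₀] (hζ : Surjective ζ) (hf : Injective f)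
    (hfζ : Exact f ζ) : MemB R ζ X ↔ Ext1Vanishes R X T :=
  ⟨ext1Vanishes_of_memB R hf hfζ, memB_of_ext1Vanishes R hζ hf hfζ⟩

end CosiltingCotilting

theorem stmt_8 {Q₀ Q₁ : Type v} [AddCommGroup Q₀] [Module R Q₀] [AddCommGroup Q₁] [Module R Q₁]
    (ζ : Q₀ →ₗ[R] Q₁) [Module.Injective R Q₀]
    (T : Type v) [AddCommGroup T] [Module R T]
    (f : T →ₗ[R] Q₀) (hf : Injective f) (hex : LinearMap.range f = LinearMap.ker ζ)
    (hζ : Surjective ζ) :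
    (∀ (X : Type v) [AddCommGroup X] [Module R X], MemB R ζ X ↔ Ext1Vanishes R X T) ∧
    ((∀ (X : Type v) [AddCommGroup X] [Module R X], MemCogen R T X ↔ MemB R ζ X) ↔
     (∀ (X : Type v) [AddCommGroup X] [Module R X], MemCogen R T X ↔ Ext1Vanishes R X T)) := by
  have hB : ∀ (X : Type v) [AddCommGroup X] [Module R X], MemB R ζ X ↔ Ext1Vanishes R X T :=
    fun _ _ _ => memB_iff_ext1Vanishes R hζ hf (exact_iff.mpr hex.symm)
  exact ⟨hB, by simp only [hB]⟩
end
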